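/- For j₀, k₀ ∈ {0,1} define ϱ_{j₀,k₀} ∈ ℂ as the coordinate of U_Φ · E_{m,s,ε_{j₀}} at basis index k₀, where ε₀ = (1,0), ε₁ = (0,1) ∈ ℂ². Suppose α = (α₀, α₁) ∈ ℂ² with |α₀|² + |α₁|² = 1 and λ ∈ ℂ satisfy ϱ_{0,0}·α₀ + ϱ_{1,0}·α₁ = λ·2^{−n/2}·α₀ and ϱ_{0,1}·α₀ + ϱ_{1,1}·α₁ = λ·2^{−n/2}·α₁. Then U_Φ · E_{m,s,α} = λ · E_{m,s,α}, i.e. E_{m,s,α} is an eigenvector of U_Φ with eigenvalue λ, and moreover |λ| = 1. -/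

import Mathlib

open Complex Matrix

/-- The single-qubit gate `R_X(−π/2) = (1/√2)[[1, i],[i, 1]]`. -/
noncomputable def RXgate : Matrix (Fin 2) (Fin 2) ℂ :=
  (1 / Real.sqrt 2 : ℝ) • !![1, I; I, 1]

/-- The single-qubit phase gate `Φ = [[1,0],[0,e^{ix}]]`. -/
noncomputable def phaseGate (x : ℝ) : Matrix (Fin 2) (Fin 2) ℂ :=
  !![1, 0; 0, Complex.exp (I * x)]

/-- A single-qubit gate `A` applied to the photon qubit (bit `0`) of the
`(n+1)`-qubit space `ℂ^{2^{n+1}}`, whose computational basis vectors `|j⟩` are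
indexed by integers `j = Σ_l j_l 2^l`. -/
noncomputable def photonGate (n : ℕ) (A : Matrix (Fin 2) (Fin 2) ℂ) :
    Matrix (Fin (2 ^ (n + 1))) (Fin (2 ^ (n + 1))) ℂ :=
  fun k j => if (k : ℕ) / 2 = (j : ℕ) / 2
    then A ⟨(k : ℕ) % 2, by omega⟩ ⟨(j : ℕ) % 2, by omega⟩ else 0

/-- CNOT gate on `ℂ^{2^{n+1}}` with control the photon qubit (bit `0`) and target
bit `t`: it maps `|j⟩` to `|j XOR 2^t⟩` when bit `0` of `j` is `1`, else `|j⟩`. -/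
def cnotGate (n t : ℕ) : Matrix (Fin (2 ^ (n + 1))) (Fin (2 ^ (n + 1))) ℂ :=
  fun k j =>
    if (k : ℕ) = (if (j : ℕ) % 2 = 1 then (j : ℕ) ^^^ 2 ^ t else (j : ℕ)) then 1 else 0

/-- The `k`-th step `S_k` of the which-path-detector circuit: for `1 ≤ k ≤ n` it applies
`R_X(−π/2)` followed by `Φ_k` to the photon qubit and then a CNOT with control the photon
qubit and target the `k`-th detector qubit (bit `n+1−k`); `S_{n+1}` applies `R_X(−π/2)`
followed by `Φ_{n+1}` to the photon qubit (no CNOT). -/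
noncomputable def stepGate (n : ℕ) (φ : ℕ → ℝ) (k : ℕ) :
    Matrix (Fin (2 ^ (n + 1))) (Fin (2 ^ (n + 1))) ℂ :=
  (if k ≤ n then cnotGate n (n + 1 - k) else 1) * photonGate n (phaseGate (φ k) * RXgate)

/-- The ordered product `S_k ⋯ S_2 S_1`. -/
noncomputable def Sprod (n : ℕ) (φ : ℕ → ℝ) :
    ℕ → Matrix (Fin (2 ^ (n + 1))) (Fin (2 ^ (n + 1))) ℂ
  | 0 => 1
  | k + 1 => stepGate n φ (k + 1) * Sprod n φ k

/-- The unitary operator `U_Φ = S_{n+1} S_n ⋯ S_1` on the `(n+1)`-qubit space. -/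
noncomputable def Uphi (n : ℕ) (φ : ℕ → ℝ) :
    Matrix (Fin (2 ^ (n + 1))) (Fin (2 ^ (n + 1))) ℂ :=
  Sprod n φ (n + 1)

/-- The vector `E_{m,s,α} ∈ ℂ^{2^{n+1}}` whose coordinate at basis index
`j = Σ_{l=0}^{n} j_l 2^l` is `2^{−n/2} · (−1)^{Σ_{l=1}^{m−1} j_l s_l} · α_{j₀}`. -/
noncomputable def Evec (n m : ℕ) (s : ℕ → Bool) (α : Fin 2 → ℂ) :
    Fin (2 ^ (n + 1)) → ℂ :=
  fun j => ((1 / Real.sqrt 2 : ℝ) ^ n : ℂ) *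
    (∏ l ∈ Finset.Icc 1 (m - 1), if (j : ℕ).testBit l ∧ s l then (-1 : ℂ) else 1) *
    α ⟨(j : ℕ) % 2, by omega⟩

/-- `ϱ_{j₀,k₀}`: the coordinate of `U_Φ · E_{m,s,ε_{j₀}}` at basis index `k₀ ∈ {0,1}`,
where `ε₀ = (1,0)` and `ε₁ = (0,1)` in `ℂ²`. -/
noncomputable def rho (n m : ℕ) (φ : ℕ → ℝ) (s : ℕ → Bool) (j₀ k₀ : Fin 2) : ℂ :=
  (Uphi n φ *ᵥ Evec n m s (fun i => if i = j₀ then 1 else 0))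
    ⟨(k₀ : ℕ), lt_of_lt_of_le k₀.isLt
      (by calc (2 : ℕ) = 2 ^ 1 := (pow_one 2).symm
        _ ≤ 2 ^ (n + 1) := Nat.pow_le_pow_right (by norm_num) (by omega))⟩

/-! Every gate of the circuit preserves the family of vectors `E_{m,s,β}`, `β ∈ ℂ²`, acting on
it through a unitary `2 × 2` matrix: a photon gate `A` acts on bit `0` only and so sends `β` to
`A β`, while the CNOT onto detector bit `t` flips bit `t` on the photon's `|1⟩` branch, which
multiplies the sign pattern `(-1)^{Σ j_l s_l}` by `±1` and so sends `β` to `diag(1, ±1) β`.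
Hence `U_Φ E_{m,s,β} = E_{m,s,N β}` for a unitary `N`, and `ϱ_{j₀,k₀} = 2^{-n/2} N_{k₀ j₀}`.
The hypotheses then say `N α = λ α`, and an eigenvalue of a unitary matrix has modulus one. -/
theorem Nat.xor_two_pow_mod_two {t : ℕ} (ht : t ≠ 0) (k : ℕ) : (k ^^^ 2 ^ t) % 2 = k % 2 := by
  have h := Nat.testBit_xor k (2 ^ t) 0
  rw [Nat.testBit_two_pow_of_ne ht, Bool.xor_false, Nat.testBit_zero, Nat.testBit_zero,
    decide_eq_decide] at h
  omega

theorem diagonal_mem_unitary {ι : Type*} [Fintype ι] [DecidableEq ι] {d : ι → ℂ}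
    (hd : ∀ i, d i ∈ unitary ℂ) : diagonal d ∈ unitary (Matrix ι ι ℂ) := by
  rw [← Matrix.unitaryGroup, mem_unitaryGroup_iff', star_eq_conjTranspose, diagonal_conjTranspose,
    diagonal_mul_diagonal, ← diagonal_one]
  exact congrArg diagonal (funext fun i => Unitary.star_mul_self_of_mem (hd i))

open scoped ComplexOrder in
theorem norm_eq_one_of_mulVec_eq_smul {ι : Type*} [Fintype ι] [DecidableEq ι]
    {U : Matrix ι ι ℂ} (hU : U ∈ unitary (Matrix ι ι ℂ)) {v : ι → ℂ} (hv : v ≠ 0) {μ : ℂ}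
    (h : U *ᵥ v = μ • v) : ‖μ‖ = 1 := by
  have hUv : star (U *ᵥ v) ⬝ᵥ (U *ᵥ v) = star v ⬝ᵥ v := by
    rw [star_mulVec, dotProduct_mulVec, vecMul_vecMul, ← star_eq_conjTranspose,
      Unitary.star_mul_self_of_mem hU, vecMul_one]
  rw [h, star_smul, smul_dotProduct, dotProduct_smul, smul_smul, smul_eq_mul] at hUv
  have hμ : star μ * μ = 1 :=
    mul_left_eq_self₀.mp hUv |>.resolve_right (dotProduct_star_self_eq_zero.not.mpr hv)
  exact CStarRing.norm_of_mem_unitary (Unitary.mem_iff_star_mul_self.mpr hμ)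

theorem phaseGate_mem_unitary (x : ℝ) : phaseGate x ∈ unitary (Matrix (Fin 2) (Fin 2) ℂ) := by
  have : phaseGate x = diagonal ![1, Complex.exp (I * x)] := by
    ext i j; fin_cases i <;> fin_cases j <;> rfl
  rw [this]
  refine diagonal_mem_unitary fun i => ?_
  fin_cases i
  · exact one_mem _
  · simp [Unitary.mem_iff, ← Complex.exp_conj, ← Complex.exp_add]

theorem RXgate_mem_unitary : RXgate ∈ unitary (Matrix (Fin 2) (Fin 2) ℂ) := by
  have h2 : ((Real.sqrt 2 : ℝ) : ℂ)⁻¹ * ((Real.sqrt 2 : ℝ) : ℂ)⁻¹ = 1 / 2 := by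
    rw [← mul_inv, ← ofReal_mul, Real.mul_self_sqrt zero_le_two]; norm_num
  rw [← Matrix.unitaryGroup, mem_unitaryGroup_iff', star_eq_conjTranspose, RXgate]
  ext i j
  fin_cases i <;> fin_cases j <;>
    simp [Matrix.mul_apply, Fin.sum_univ_two, mul_mul_mul_comm _ I, h2] <;> ring

section Gates

variable {n : ℕ}

-- This is `g ⊗ β` when `g j` depends only on the detector bits `j / 2`.
def photonVec (n : ℕ) (g : ℕ → ℂ) (β : Fin 2 → ℂ) : Fin (2 ^ (n + 1)) → ℂ :=
  fun j => g j * β ⟨(j : ℕ) % 2, by omega⟩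

theorem photonGate_mulVec_photonVec {g : ℕ → ℂ} (hg : ∀ a b, a / 2 = b / 2 → g a = g b)
    (A : Matrix (Fin 2) (Fin 2) ℂ) (β : Fin 2 → ℂ) :
    photonGate n A *ᵥ photonVec n g β = photonVec n g (A *ᵥ β) := by
  funext k
  have hk : 2 * ((k : ℕ) / 2) + 1 < 2 ^ (n + 1) := by
    have := k.isLt; have := pow_succ 2 n; omega
  let pair : Fin 2 → Fin (2 ^ (n + 1)) := fun b => ⟨2 * ((k : ℕ) / 2) + b, by omega⟩
  have hpair : Function.Injective pair := fun a b h => by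
    simpa [pair, Fin.ext_iff] using h
  simp only [mulVec, dotProduct, photonVec, Finset.mul_sum]
  refine (Fintype.sum_of_injective pair hpair _ _ (fun j hj => ?_) fun b => ?_).symm
  · have hdiv : (k : ℕ) / 2 ≠ (j : ℕ) / 2 := fun h =>
      hj ⟨⟨(j : ℕ) % 2, by omega⟩, Fin.ext (by simp only [pair]; omega)⟩
    simp [photonGate, hdiv]
  · have hdiv : (k : ℕ) / 2 = (2 * ((k : ℕ) / 2) + b) / 2 := by omega
    have hmod : (2 * ((k : ℕ) / 2) + b) % 2 = b := by omega
    simp only [photonGate, pair, if_pos hdiv, hmod, hg _ _ hdiv]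
    ring

def cnotIndex (t j : ℕ) : ℕ := if j % 2 = 1 then j ^^^ 2 ^ t else j

theorem cnotGate_apply (t : ℕ) (k j : Fin (2 ^ (n + 1))) :
    cnotGate n t k j = if (k : ℕ) = cnotIndex t j then 1 else 0 := rfl

theorem cnotIndex_mod_two {t : ℕ} (ht : t ≠ 0) (j : ℕ) : cnotIndex t j % 2 = j % 2 := by
  unfold cnotIndex
  split_ifs
  exacts [Nat.xor_two_pow_mod_two ht j, rfl]

theorem cnotIndex_cnotIndex {t : ℕ} (ht : t ≠ 0) (j : ℕ) : cnotIndex t (cnotIndex t j) = j := by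
  have := cnotIndex_mod_two ht j
  unfold cnotIndex at *
  split_ifs at * <;> first | omega | exact Nat.xor_xor_cancel_right j _

theorem cnotIndex_lt {t : ℕ} (ht : t ≤ n) {j : ℕ} (hj : j < 2 ^ (n + 1)) :
    cnotIndex t j < 2 ^ (n + 1) := by
  unfold cnotIndex
  split_ifs
  exacts [Nat.xor_lt_two_pow hj (Nat.pow_lt_pow_right one_lt_two (by omega)), hj]

theorem cnotGate_mulVec_apply {t : ℕ} (ht : t ≠ 0) (htn : t ≤ n) (v : Fin (2 ^ (n + 1)) → ℂ)
    (k : Fin (2 ^ (n + 1))) :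
    (cnotGate n t *ᵥ v) k = v ⟨cnotIndex t k, cnotIndex_lt htn k.isLt⟩ := by
  rw [mulVec, dotProduct, Fintype.sum_eq_single ⟨cnotIndex t k, cnotIndex_lt htn k.isLt⟩]
  · simp [cnotGate_apply, cnotIndex_cnotIndex ht]
  · intro j hj
    have : (k : ℕ) ≠ cnotIndex t j := fun h => hj (Fin.ext (by simp [h, cnotIndex_cnotIndex ht]))
    simp [cnotGate_apply, this]

theorem cnotGate_mulVec_photonVec {t : ℕ} (ht : t ≠ 0) (htn : t ≤ n) {g : ℕ → ℂ} {e : ℂ}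
    (hg : ∀ j, g (j ^^^ 2 ^ t) = e * g j) (β : Fin 2 → ℂ) :
    cnotGate n t *ᵥ photonVec n g β = photonVec n g (diagonal ![1, e] *ᵥ β) := by
  funext k
  have hidx : (⟨cnotIndex t k % 2, by omega⟩ : Fin 2) = ⟨k % 2, by omega⟩ :=
    Fin.ext (cnotIndex_mod_two ht k)
  rw [cnotGate_mulVec_apply ht htn, photonVec, photonVec, hidx, mulVec_diagonal]
  rcases Nat.mod_two_eq_zero_or_one k with hk | hk
  · simp [cnotIndex, hk]
  · simp [cnotIndex, hk, hg]
    ring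

end Gates

section Circuit

variable {n : ℕ} {g : ℕ → ℂ}

theorem exists_mem_unitary_stepGate_mulVec_photonVec (hg₀ : ∀ a b, a / 2 = b / 2 → g a = g b)
    (hg : ∀ t, t ≠ 0 → ∃ e ∈ unitary ℂ, ∀ j, g (j ^^^ 2 ^ t) = e * g j)
    (φ : ℕ → ℝ) {k : ℕ} (hk : 1 ≤ k) :
    ∃ M ∈ unitary (Matrix (Fin 2) (Fin 2) ℂ),
      ∀ β, stepGate n φ k *ᵥ photonVec n g β = photonVec n g (M *ᵥ β) := by
  have hR := Submonoid.mul_mem _ (phaseGate_mem_unitary (φ k)) RXgate_mem_unitary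
  unfold stepGate
  split_ifs with hkn
  · obtain ⟨e, he, hge⟩ := hg (n + 1 - k) (by omega)
    have hD : diagonal ![1, e] ∈ unitary (Matrix (Fin 2) (Fin 2) ℂ) :=
      diagonal_mem_unitary fun i => by fin_cases i; exacts [one_mem _, he]
    refine ⟨_, Submonoid.mul_mem _ hD hR, fun β => ?_⟩
    rw [← mulVec_mulVec, photonGate_mulVec_photonVec hg₀,
      cnotGate_mulVec_photonVec (by omega) (by omega) hge, mulVec_mulVec]
  · exact ⟨_, hR, fun β => by rw [one_mul, photonGate_mulVec_photonVec hg₀]⟩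

theorem exists_mem_unitary_Sprod_mulVec_photonVec (hg₀ : ∀ a b, a / 2 = b / 2 → g a = g b)
    (hg : ∀ t, t ≠ 0 → ∃ e ∈ unitary ℂ, ∀ j, g (j ^^^ 2 ^ t) = e * g j)
    (φ : ℕ → ℝ) (k : ℕ) :
    ∃ N ∈ unitary (Matrix (Fin 2) (Fin 2) ℂ),
      ∀ β, Sprod n φ k *ᵥ photonVec n g β = photonVec n g (N *ᵥ β) := by
  induction k with
  | zero => exact ⟨1, one_mem _, fun β => by simp [Sprod]⟩
  | succ k ih =>
    obtain ⟨N, hN, hNβ⟩ := ih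
    obtain ⟨M, hM, hMβ⟩ :=
      exists_mem_unitary_stepGate_mulVec_photonVec hg₀ hg φ (Nat.le_add_left 1 k)
    exact ⟨M * N, Submonoid.mul_mem _ hM hN, fun β => by
      rw [Sprod, ← mulVec_mulVec, hNβ, hMβ, mulVec_mulVec]⟩

end Circuit

section Sign

variable {S : Finset ℕ} {s : ℕ → Bool}

def paritySign (S : Finset ℕ) (s : ℕ → Bool) (j : ℕ) : ℂ :=
  ∏ l ∈ S, if j.testBit l ∧ s l then -1 else 1

theorem paritySign_eq_of_div_two_eq (hS : 0 ∉ S) {a b : ℕ} (h : a / 2 = b / 2) :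
    paritySign S s a = paritySign S s b := by
  refine Finset.prod_congr rfl fun l hl => ?_
  obtain ⟨l, rfl⟩ := Nat.exists_eq_succ_of_ne_zero (ne_of_mem_of_not_mem hl hS)
  rw [Nat.testBit_succ, Nat.testBit_succ, h]

theorem paritySign_of_lt_two (hS : 0 ∉ S) {j : ℕ} (hj : j < 2) : paritySign S s j = 1 := by
  rw [paritySign_eq_of_div_two_eq hS (show j / 2 = 0 / 2 by omega)]
  simp [paritySign]

theorem paritySign_xor_two_pow (t j : ℕ) :
    paritySign S s (j ^^^ 2 ^ t) = (if t ∈ S ∧ s t then -1 else 1) * paritySign S s j := by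
  have hfactor : ∀ l, (if (j ^^^ 2 ^ t).testBit l ∧ s l then (-1 : ℂ) else 1) =
      (if l = t then (if s t then -1 else 1) else 1) * (if j.testBit l ∧ s l then -1 else 1) := by
    intro l
    rcases eq_or_ne l t with rfl | hl
    · rw [Nat.testBit_xor, Nat.testBit_two_pow_self]
      cases j.testBit l <;> cases s l <;> simp
    · rw [Nat.testBit_xor, Nat.testBit_two_pow_of_ne hl.symm, Bool.xor_false]
      simp [hl]
  rw [paritySign, Finset.prod_congr rfl fun l _ => hfactor l, Finset.prod_mul_distrib,
    Finset.prod_ite_eq']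
  congr 1
  by_cases t ∈ S <;> simp [*]

end Sign

theorem Evec_eq_photonVec (n m : ℕ) (s : ℕ → Bool) (β : Fin 2 → ℂ) :
    Evec n m s β = photonVec n
      (fun j => ((1 / Real.sqrt 2 : ℝ) ^ n : ℂ) * paritySign (Finset.Icc 1 (m - 1)) s j) β :=
  rfl

theorem exists_mem_unitary_Uphi_mulVec_Evec (n m : ℕ) (φ : ℕ → ℝ) (s : ℕ → Bool) :
    ∃ N ∈ unitary (Matrix (Fin 2) (Fin 2) ℂ),
      ∀ β, Uphi n φ *ᵥ Evec n m s β = Evec n m s (N *ᵥ β) := by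
  have hS : 0 ∉ Finset.Icc 1 (m - 1) := by simp
  simp only [Evec_eq_photonVec]
  refine exists_mem_unitary_Sprod_mulVec_photonVec
    (fun a b h => by rw [paritySign_eq_of_div_two_eq hS h]) (fun t _ => ?_) φ (n + 1)
  refine ⟨if t ∈ Finset.Icc 1 (m - 1) ∧ s t then -1 else 1, ?_,
    fun j => by rw [paritySign_xor_two_pow]; ring⟩
  split_ifs <;> simp [Unitary.mem_iff]

theorem rho_eq_of_Uphi_mulVec_Evec {n m : ℕ} {φ : ℕ → ℝ} {s : ℕ → Bool}
    {N : Matrix (Fin 2) (Fin 2) ℂ} (hN : ∀ β, Uphi n φ *ᵥ Evec n m s β = Evec n m s (N *ᵥ β))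
    (j₀ k₀ : Fin 2) :
    rho n m φ s j₀ k₀ = ((1 / Real.sqrt 2 : ℝ) ^ n : ℂ) * N k₀ j₀ := by
  rw [rho, hN, Evec_eq_photonVec, photonVec, paritySign_of_lt_two (by simp) k₀.isLt, mul_one]
  simp [Nat.mod_eq_of_lt k₀.isLt, ← Pi.single_apply]

theorem Evec_smul (n m : ℕ) (s : ℕ → Bool) (a : ℂ) (β : Fin 2 → ℂ) :
    Evec n m s (a • β) = a • Evec n m s β := by
  funext j
  simp only [Evec, Pi.smul_apply, smul_eq_mul]
  ring

theorem stmt10_general (n m : ℕ)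
    (φ : ℕ → ℝ) (s : ℕ → Bool)
    (α : Fin 2 → ℂ) (hα : ‖α 0‖ ^ 2 + ‖α 1‖ ^ 2 = 1)
    (lam : ℂ)
    (h0 : rho n m φ s 0 0 * α 0 + rho n m φ s 1 0 * α 1 =
      lam * ((1 / Real.sqrt 2 : ℝ) ^ n : ℂ) * α 0)
    (h1 : rho n m φ s 0 1 * α 0 + rho n m φ s 1 1 * α 1 =
      lam * ((1 / Real.sqrt 2 : ℝ) ^ n : ℂ) * α 1) :
    Uphi n φ *ᵥ Evec n m s α = lam • Evec n m s α ∧ ‖lam‖ = 1 := by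
  obtain ⟨N, hNu, hN⟩ := exists_mem_unitary_Uphi_mulVec_Evec n m φ s
  have hc : ((1 / Real.sqrt 2 : ℝ) ^ n : ℂ) ≠ 0 := by simp
  have hNα : N *ᵥ α = lam • α := by
    simp only [rho_eq_of_Uphi_mulVec_Evec hN] at h0 h1
    ext b
    fin_cases b <;> refine mul_left_cancel₀ hc ?_ <;>
      simp only [Fin.zero_eta, Fin.mk_one, mulVec, dotProduct, Fin.sum_univ_two, Pi.smul_apply,
        smul_eq_mul]
    · linear_combination h0
    · linear_combination h1
  have hα₀ : α ≠ 0 := by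
    rintro rfl
    simp at hα
  exact ⟨by rw [hN, hNα, Evec_smul], norm_eq_one_of_mulVec_eq_smul hNu hα₀ hNα⟩

/-- Suppose `α = (α₀, α₁) ∈ ℂ²` with `|α₀|² + |α₁|² = 1` and `λ ∈ ℂ`
satisfy `ϱ_{0,0}·α₀ + ϱ_{1,0}·α₁ = λ·2^{−n/2}·α₀` and `ϱ_{0,1}·α₀ + ϱ_{1,1}·α₁ = λ·2^{−n/2}·α₁`.
Then `U_Φ · E_{m,s,α} = λ · E_{m,s,α}`, i.e. `E_{m,s,α}` is an eigenvector of `U_Φ` with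
eigenvalue `λ`, and moreover `|λ| = 1`. -/
theorem stmt10 (n m : ℕ) (hn : 1 ≤ n) (hm : 1 ≤ m) (hmn : m ≤ n + 1)
    (φ : ℕ → ℝ) (s : ℕ → Bool) (hs : 2 ≤ m → s (m - 1) = true)
    (α : Fin 2 → ℂ) (hα : ‖α 0‖ ^ 2 + ‖α 1‖ ^ 2 = 1)
    (lam : ℂ)
    (h0 : rho n m φ s 0 0 * α 0 + rho n m φ s 1 0 * α 1 =
      lam * ((1 / Real.sqrt 2 : ℝ) ^ n : ℂ) * α 0)
    (h1 : rho n m φ s 0 1 * α 0 + rho n m φ s 1 1 * α 1 =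
      lam * ((1 / Real.sqrt 2 : ℝ) ^ n : ℂ) * α 1) :
    Uphi n φ *ᵥ Evec n m s α = lam • Evec n m s α ∧ ‖lam‖ = 1 :=
  stmt10_general n m φ s α hα lam h0 h1
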